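/- The standard eliminative public announcement update fails for LEI: there exists a LEI-model M with world w₀ such that M, w₀ ⊨ Ip, and after the eliminative update by p (restricting to worlds where p is true), the updated model still satisfies Ip at w₀; that is, M, w₀ ⊨ Ip → [!p]Ip. -/
import Mathlib


/-- Three truth values of strong Kleene logic: `f` (0), `n` (∅), `t` (1). -/
inductive TV where
  | f : TV
  | n : TV
  | t : TV
deriving DecidableEq

/-- Kleene negation: swaps 1 and 0, fixes ∅. -/
def TV.neg : TV → TV
  | .t => .f
  | .n => .n
  | .f => .t

/-- Kleene conjunction: minimum under 0 < ∅ < 1. -/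
def TV.and : TV → TV → TV
  | .t, b => b
  | .n, .t => .n
  | .n, b => b
  | .f, _ => .f

/-- Kleene disjunction: maximum under 0 < ∅ < 1. -/
def TV.or : TV → TV → TV
  | .f, b => b
  | .n, .f => .n
  | .n, b => b
  | .t, _ => .t

/-- Two-valued implication: value 1 unless the antecedent is 1 and the consequent is not. -/
def TV.imp : TV → TV → TV
  | .t, .t => .t
  | .t, _ => .f
  | _, _ => .t

/-- Modal formulas of LEI: atoms, ¬, ∧, ∨, → and the ignorance operator I. -/
inductive MForm where
  | atom : ℕ → MForm
  | neg : MForm → MForm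
  | conj : MForm → MForm → MForm
  | disj : MForm → MForm → MForm
  | impl : MForm → MForm → MForm
  | ig : MForm → MForm

/-- A LEI-model: a Kripke frame with a three-valued atomic valuation. -/
structure LEIModel (W : Type) where
  R : W → W → Prop
  V : ℕ → W → TV

open Classical in
/-- Three-valued evaluation in a LEI-model: strong Kleene clauses for ¬, ∧, ∨,
two-valued implication, and `I φ` is `t` at `w` iff `φ` is `t` at `w` and `φ` is not `t`
at any accessible world distinct from `w`; otherwise `I φ` is `f`. -/
noncomputable def val {W : Type} (M : LEIModel W) : MForm → W → TV
  | .atom k, w => M.V k w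
  | .neg φ, w => (val M φ w).neg
  | .conj φ ψ, w => (val M φ w).and (val M ψ w)
  | .disj φ ψ, w => (val M φ w).or (val M ψ w)
  | .impl φ ψ, w => (val M φ w).imp (val M ψ w)
  | .ig φ, w =>
      if val M φ w = TV.t ∧ ∀ w', w' ≠ w → M.R w w' → val M φ w' ≠ TV.t then TV.t
      else TV.f

/-- The standard eliminative public announcement update: restrict to the worlds where φ
is true, restricting the accessibility relation and the valuation accordingly. -/
noncomputable def elimUpdate {W : Type} (M : LEIModel W) (φ : MForm) :
    LEIModel {w : W // val M φ w = TV.t} where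
  R a b := M.R a.1 b.1
  V k w := M.V k w.1

/-- Failure of eliminative update for LEI: there is a LEI-model M and a world w₀ with
M, w₀ ⊨ Ip, such that after the eliminative update by p the updated model still
satisfies Ip at w₀. -/
theorem stmt13 :
    ∃ (W : Type) (M : LEIModel W) (w₀ : W) (h : val M (.atom 0) w₀ = TV.t),
      val M (.ig (.atom 0)) w₀ = TV.t ∧
        val (elimUpdate M (.atom 0)) (.ig (.atom 0)) ⟨w₀, h⟩ = TV.t := by
  refine ⟨Fin 3, ⟨fun a b => a = 0 ∧ b ≠ 0, fun _ w => if w = 0 then TV.t else TV.f⟩, 0, ?_, ?_, ?_⟩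
  · simp [val]
  · rw [val, if_pos]
    refine ⟨by simp [val], fun w' hne _ => ?_⟩
    simp [val, hne]
  · rw [val, if_pos]
    refine ⟨by simp [val, elimUpdate], fun w' hne hR => ?_⟩
    exfalso
    have := w'.2
    simp [val] at this
    exact hR.2 this
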